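/- arXiv:1201.2048 — 4 statements merged into one kernel-verified Lean document; each statement's English description precedes it below -/
import Mathlib

section
/- Let ν ≥ 1 and r ≥ 2 be a natural number, and n ≥ 1. Then there exists a constant B > 0 depending only on n and r such that for every multi-index α ∈ ℤ₊ⁿ, the sum over decompositions α = α' + α'' of (α!/(α'!α''!)) · ({(α'-r)!}^ν {(α''-r)!}^ν / {(α-r)!}^ν) is bounded by B. -/
/-!
Write `D x = x! / (x - r)!` (truncated subtraction). The one-dimensional term
`C(m,k) (k-r)! (m-k-r)! / (m-r)!` equals `D m / (D k * D (m-k))`, and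
`(x+1)^r / (r+1)^r ≤ D x ≤ (x+1)^r`. As `(m+1) / ((k+1)(m-k+1)) ≤ 1/(k+1) + 1/(m-k+1)`,
the term is `O_r(1/(k+1)^r + 1/(m-k+1)^r)`, hence summable over `k ≤ m` uniformly in `m`
because `r ≥ 2`. For `ν ≥ 1`, raising the factorial quotient (which is at most `1`) to the
power `ν` only decreases it, and the multi-index sum of products factors as a product of
one-dimensional sums.
-/

open Finset Nat

/-- `x ! / (x - r)!` with truncated subtraction: the falling factorial `x (x - 1) ⋯ (x - r + 1)`
when `r ≤ x`, and `x !` when `x < r`. -/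
def truncDescFactorial (r x : ℕ) : ℕ := x.descFactorial (min x r)

theorem factorial_sub_mul_truncDescFactorial (r x : ℕ) :
    (x - r)! * truncDescFactorial r x = x ! := by
  have h := factorial_mul_descFactorial (min_le_left x r)
  rwa [show x - min x r = x - r by omega] at h

theorem truncDescFactorial_le_pow (r x : ℕ) : truncDescFactorial r x ≤ (x + 1) ^ r :=
  calc truncDescFactorial r x ≤ x ^ min x r := descFactorial_le_pow x _
    _ ≤ (x + 1) ^ min x r := Nat.pow_le_pow_left (le_succ x) _
    _ ≤ (x + 1) ^ r := Nat.pow_le_pow_right (succ_pos x) (min_le_right x r)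

theorem pow_le_truncDescFactorial (r x : ℕ) :
    (x + 1) ^ r ≤ (r + 1) ^ r * truncDescFactorial r x := by
  unfold truncDescFactorial
  rcases le_total r x with hrx | hxr
  · rw [min_eq_right hrx]
    have hfactor : x + 1 ≤ (r + 1) * (x + 1 - r) := by
      obtain ⟨t, rfl⟩ := Nat.exists_eq_add_of_le hrx
      rw [show r + t + 1 - r = t + 1 by omega]
      nlinarith
    calc (x + 1) ^ r ≤ ((r + 1) * (x + 1 - r)) ^ r := Nat.pow_le_pow_left hfactor r
      _ ≤ (r + 1) ^ r * x.descFactorial r := by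
        rw [mul_pow]; exact Nat.mul_le_mul_left _ (pow_sub_le_descFactorial x r)
  · calc (x + 1) ^ r ≤ (r + 1) ^ r := Nat.pow_le_pow_left (by omega) r
      _ ≤ (r + 1) ^ r * x.descFactorial (min x r) :=
        Nat.le_mul_of_pos_right _ (descFactorial_pos.mpr (min_le_left x r))

theorem factorial_sub_mul_factorial_sub_le (r : ℕ) {m k : ℕ} (hk : k ≤ m) :
    (k - r)! * (m - k - r)! ≤ (m - r)! :=
  calc (k - r)! * (m - k - r)! ≤ (k - r + (m - k - r))! :=
        le_of_dvd (factorial_pos _) (factorial_mul_factorial_dvd_factorial_add _ _)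
    _ ≤ (m - r)! := factorial_le (by omega)

noncomputable def binomWeight (r m k : ℕ) : ℝ :=
  m.choose k * ((k - r)! * (m - k - r)! / (m - r)!)

theorem binomWeight_nonneg (r m k : ℕ) : 0 ≤ binomWeight r m k := by
  unfold binomWeight; positivity

theorem binomWeight_eq {r m k : ℕ} (hk : k ≤ m) :
    binomWeight r m k = truncDescFactorial r m /
      (truncDescFactorial r k * truncDescFactorial r (m - k)) := by
  have hfac (x : ℕ) : (truncDescFactorial r x : ℝ) = x ! / (x - r)! := by
    rw [eq_div_iff (by positivity), mul_comm]
    exact_mod_cast factorial_sub_mul_truncDescFactorial r x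
  rw [binomWeight, cast_choose ℝ hk, hfac, hfac, hfac]
  field_simp

theorem binomWeight_le {r m k : ℕ} (hr : 2 ≤ r) (hk : k ≤ m) :
    binomWeight r m k ≤ 2 ^ (r - 1) * (r + 1 : ℝ) ^ (2 * r) *
      (((k + 1 : ℝ) ^ 2)⁻¹ + (((m - k : ℕ) + 1 : ℝ) ^ 2)⁻¹) := by
  set l := m - k
  set a : ℝ := (k + 1 : ℝ)⁻¹
  set b : ℝ := ((l : ℝ) + 1)⁻¹
  have hlower (x : ℕ) : ((x : ℝ) + 1) ^ r / (r + 1) ^ r ≤ truncDescFactorial r x := by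
    rw [div_le_iff₀' (by positivity)]
    exact_mod_cast pow_le_truncDescFactorial r x
  have hsum : (m + 1 : ℝ) * a * b ≤ a + b := by
    have : (m : ℝ) = k + l := by simp [l, hk]
    simp only [a, b, this]
    field_simp
    linarith
  have ha : a ≤ 1 := inv_le_one_of_one_le₀ (by simp)
  have hb : b ≤ 1 := inv_le_one_of_one_le₀ (by simp)
  calc binomWeight r m k
      = truncDescFactorial r m / (truncDescFactorial r k * truncDescFactorial r l) :=
        binomWeight_eq hk
    _ ≤ (m + 1) ^ r / ((k + 1) ^ r / (r + 1) ^ r * ((l + 1) ^ r / (r + 1) ^ r)) := by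
        gcongr ?_ / (?_ * ?_)
        exacts [mod_cast truncDescFactorial_le_pow r m, hlower k, hlower l]
    _ = (r + 1 : ℝ) ^ (2 * r) * ((m + 1) * a * b) ^ r := by
        simp only [a, b, mul_pow, inv_pow]
        field_simp
        ring
    _ ≤ (r + 1 : ℝ) ^ (2 * r) * (2 ^ (r - 1) * (a ^ r + b ^ r)) := by
        gcongr
        exact (pow_le_pow_left₀ (by positivity) hsum r).trans
          (add_pow_le (by positivity) (by positivity) r)
    _ ≤ (r + 1 : ℝ) ^ (2 * r) * (2 ^ (r - 1) * (a ^ 2 + b ^ 2)) := by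
        gcongr ?_ * (?_ * ?_)
        exact add_le_add (pow_le_pow_of_le_one (by positivity) ha hr)
          (pow_le_pow_of_le_one (by positivity) hb hr)
    _ = _ := by simp only [a, b, inv_pow]; ring

theorem sum_range_inv_sq_succ_le (N : ℕ) : ∑ k ∈ range N, ((k + 1 : ℝ) ^ 2)⁻¹ ≤ 2 := by
  have h := sum_Ioo_inv_sq_le (α := ℝ) 0 (N + 1)
  rw [← Ico_succ_left_eq_Ioo, sum_Ico_eq_sum_range] at h
  simpa [add_comm] using h

theorem sum_binomWeight_le {r : ℕ} (hr : 2 ≤ r) (m : ℕ) :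
    ∑ k ∈ Iic m, binomWeight r m k ≤ 4 * (2 ^ (r - 1) * (r + 1 : ℝ) ^ (2 * r)) := by
  have hreflect : ∑ k ∈ range (m + 1), (((m - k : ℕ) + 1 : ℝ) ^ 2)⁻¹ =
      ∑ k ∈ range (m + 1), ((k + 1 : ℝ) ^ 2)⁻¹ := by
    simpa using sum_range_reflect (fun k ↦ ((k + 1 : ℝ) ^ 2)⁻¹) (m + 1)
  rw [← range_succ_eq_Iic]
  calc ∑ k ∈ range (m + 1), binomWeight r m k
      ≤ ∑ k ∈ range (m + 1), 2 ^ (r - 1) * (r + 1 : ℝ) ^ (2 * r) *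
          (((k + 1 : ℝ) ^ 2)⁻¹ + (((m - k : ℕ) + 1 : ℝ) ^ 2)⁻¹) :=
        sum_le_sum fun k hk ↦ binomWeight_le hr (Nat.lt_succ_iff.mp (mem_range.mp hk))
    _ = 2 ^ (r - 1) * (r + 1 : ℝ) ^ (2 * r) *
          (2 * ∑ k ∈ range (m + 1), ((k + 1 : ℝ) ^ 2)⁻¹) := by
        rw [← mul_sum, sum_add_distrib, hreflect]
        ring
    _ ≤ 2 ^ (r - 1) * (r + 1 : ℝ) ^ (2 * r) * (2 * 2) := by
        gcongr; exact sum_range_inv_sq_succ_le _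
    _ = _ := by ring

theorem rpow_mul_rpow_div_rpow_le {a b c ν : ℝ} (ha : 0 ≤ a) (hb : 0 ≤ b) (hc : 0 < c)
    (habc : a * b ≤ c) (hν : 1 ≤ ν) : a ^ ν * b ^ ν / c ^ ν ≤ a * b / c := by
  rw [← Real.mul_rpow ha hb, ← Real.div_rpow (by positivity) hc.le]
  exact Real.rpow_le_self_of_le_one (by positivity) ((div_le_one hc).mpr habc) hν

theorem multinomial_summand_le_prod_binomWeight {n r : ℕ} {ν : ℝ} (hν : 1 ≤ ν)
    {α α' : Fin n → ℕ} (hα' : α' ≤ α) :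
    (∏ i, ((α i).choose (α' i)) : ℝ) *
        ((∏ i, ((α' i - r)! : ℝ)) ^ ν * (∏ i, ((α i - α' i - r)! : ℝ)) ^ ν /
          (∏ i, ((α i - r)! : ℝ)) ^ ν) ≤
      ∏ i, binomWeight r (α i) (α' i) := by
  have hfac :
      (∏ i, ((α' i - r)! : ℝ)) * ∏ i, ((α i - α' i - r)! : ℝ) ≤
        ∏ i, ((α i - r)! : ℝ) := by
    rw [← prod_mul_distrib]
    exact prod_le_prod (fun i _ ↦ by positivity)
      fun i _ ↦ by exact_mod_cast factorial_sub_mul_factorial_sub_le r (hα' i)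
  calc _ ≤ (∏ i, ((α i).choose (α' i)) : ℝ) *
        ((∏ i, ((α' i - r)! : ℝ)) * (∏ i, ((α i - α' i - r)! : ℝ)) /
          ∏ i, ((α i - r)! : ℝ)) := by
        gcongr _ * ?_
        exact rpow_mul_rpow_div_rpow_le (by positivity) (by positivity) (by positivity) hfac hν
    _ = ∏ i, binomWeight r (α i) (α' i) := by
        simp only [binomWeight, prod_mul_distrib, prod_div_distrib]

theorem stmt0_general (ν : ℝ) (hν : 1 ≤ ν) (n r : ℕ) (hr : 2 ≤ r) :
    ∃ B : ℝ, 0 < B ∧ ∀ α : Fin n → ℕ,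
      ∑ α' ∈ Finset.Iic α,
        (∏ i, ((α i).choose (α' i)) : ℝ) *
          ((∏ i, ((α' i - r).factorial : ℝ)) ^ ν *
            (∏ i, ((α i - α' i - r).factorial : ℝ)) ^ ν /
              (∏ i, ((α i - r).factorial : ℝ)) ^ ν) ≤ B := by
  set C : ℝ := 4 * (2 ^ (r - 1) * (r + 1 : ℝ) ^ (2 * r))
  refine ⟨C ^ n, by positivity, fun α ↦ ?_⟩
  calc _ ≤ ∑ α' ∈ Iic α, ∏ i, binomWeight r (α i) (α' i) :=
        sum_le_sum fun α' hα' ↦ multinomial_summand_le_prod_binomWeight hν (mem_Iic.mp hα')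
    _ = ∏ i, ∑ k ∈ Iic (α i), binomWeight r (α i) k :=
        (prod_univ_sum (fun i ↦ Iic (α i)) _).symm
    _ ≤ ∏ _i : Fin n, C :=
        prod_le_prod (fun i _ ↦ sum_nonneg fun k _ ↦ binomWeight_nonneg r _ k)
          fun i _ ↦ sum_binomWeight_le hr (α i)
    _ = C ^ n := by simp

/-- Morimoto's combinatorial proposition, first part: for `ν ≥ 1` and `r ≥ 2`,
the multi-index sum `∑_{α'+α''=α} (α!/(α'!α''!)) {(α'-r)!}^ν {(α''-r)!}^ν / {(α-r)!}^ν`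
is bounded by a constant depending only on `n` and `r`.  Here `(α - r)! = ∏ᵢ (αᵢ - r)!`
with the convention `(k - r)! = 1` for `k < r` (truncated subtraction). -/
theorem stmt0 (ν : ℝ) (hν : 1 ≤ ν) (n r : ℕ) (hr : 2 ≤ r) (hn : 1 ≤ n) :
    ∃ B : ℝ, 0 < B ∧ ∀ α : Fin n → ℕ,
      ∑ α' ∈ Finset.Iic α,
        (∏ i, ((α i).choose (α' i)) : ℝ) *
          ((∏ i, ((α' i - r).factorial : ℝ)) ^ ν *
            (∏ i, ((α i - α' i - r).factorial : ℝ)) ^ ν /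
              (∏ i, ((α i - r).factorial : ℝ)) ^ ν) ≤ B :=
  stmt0_general ν hν n r hr
end

section
/- For fixed v₊ ∈ ℝ³ and σ ∈ S², the change of variables v ↦ v' = (v+v₊)/2 + (|v-v₊|/2)σ has Jacobian determinant satisfying |det(∂v'/∂v)| = cos²(θ/2)/4, where cos θ = ((v-v₊)/|v-v₊|)·σ. -/
open scoped RealInnerProductSpace

lemma hasFDerivAt_norm'' {E : Type*} [NormedAddCommGroup E] [InnerProductSpace ℝ E]
    {x : E} (hx : x ≠ 0) :
    HasFDerivAt (fun y : E => ‖y‖) (innerSL ℝ ((‖x‖⁻¹ : ℝ) • x)) x := by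
  have hx2 : (0:ℝ) < ‖x‖ ^ 2 := by simp [hx]
  have h1 : HasFDerivAt (fun y : E => ‖y‖ ^ 2) (2 • (innerSL ℝ x)) x := by
    simpa using (hasFDerivAt_id x).norm_sq
  have h2 := (Real.hasDerivAt_sqrt hx2.ne').comp_hasFDerivAt x h1
  have heq : (fun y : E => Real.sqrt (‖y‖ ^ 2)) = fun y => ‖y‖ := by
    funext y; rw [Real.sqrt_sq (norm_nonneg y)]
  simp only [Function.comp_def] at h2
  rw [heq] at h2
  refine h2.congr_fderiv ?_; symm
  ext h
  simp [real_inner_smul_left, Real.sqrt_sq (norm_nonneg x)]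
  field_simp

lemma det_collision_map (σ k : EuclideanSpace ℝ (Fin 3))
    (A : EuclideanSpace ℝ (Fin 3) →L[ℝ] EuclideanSpace ℝ (Fin 3))
    (hA : A = (2:ℝ)⁻¹ • ContinuousLinearMap.id ℝ (EuclideanSpace ℝ (Fin 3))
        + ((2:ℝ)⁻¹ • innerSL ℝ k).smulRight σ) :
    ContinuousLinearMap.det A = (1/8) * (1 + ⟪k, σ⟫) := by
  have hdet : ContinuousLinearMap.det A
      = Matrix.det (LinearMap.toMatrix (EuclideanSpace.basisFun (Fin 3) ℝ).toBasis
          (EuclideanSpace.basisFun (Fin 3) ℝ).toBasis (A : _ →ₗ[ℝ] _)) :=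
    (LinearMap.det_toMatrix _ _).symm
  rw [hdet]
  have hM : LinearMap.toMatrix (EuclideanSpace.basisFun (Fin 3) ℝ).toBasis
      (EuclideanSpace.basisFun (Fin 3) ℝ).toBasis (A : _ →ₗ[ℝ] _)
      = (2:ℝ)⁻¹ • (1 + Matrix.replicateCol (Fin 1) (⇑σ) * Matrix.replicateRow (Fin 1) (⇑k)) := by
    ext i j
    simp [LinearMap.toMatrix_apply, hA, EuclideanSpace.basisFun_apply,
      EuclideanSpace.inner_single_right, Matrix.one_apply, Matrix.mul_apply,
      EuclideanSpace.single_apply, mul_comm]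
    split <;> ring
  erw [hM, Matrix.det_smul, Matrix.det_one_add_replicateCol_mul_replicateRow (ι := Fin 1)]
  have h1 : ⟪k, σ⟫ = dotProduct (⇑k) (⇑σ) := by
    simp [PiLp.inner_apply, dotProduct, mul_comm]
  rw [h1]
  norm_num [Fintype.card_fin]

/-- Jacobian of the collision change of variables `v ↦ v' = (v+v₊)/2 + (|v-v₊|/2)σ`
(with `v₊` and `σ ∈ S²` fixed): `|det(∂v'/∂v)| = cos²(θ/2)/4`, where
`cos θ = ((v-v₊)/|v-v₊|)·σ`. -/
theorem stmt11 (vs σ : EuclideanSpace ℝ (Fin 3)) (hσ : ‖σ‖ = 1)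
    (v : EuclideanSpace ℝ (Fin 3)) (hv : v ≠ vs) :
    |ContinuousLinearMap.det
        (fderiv ℝ
          (fun u : EuclideanSpace ℝ (Fin 3) =>
            (2 : ℝ)⁻¹ • (u + vs) + (‖u - vs‖ / 2) • σ) v)| =
      Real.cos (Real.arccos ⟪‖v - vs‖⁻¹ • (v - vs), σ⟫ / 2) ^ 2 / 4 := by
  have hx : v - vs ≠ 0 := sub_ne_zero.mpr hv
  set k : EuclideanSpace ℝ (Fin 3) := (‖v - vs‖⁻¹ : ℝ) • (v - vs) with hk
  have hA : HasFDerivAt (fun u : EuclideanSpace ℝ (Fin 3) =>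
        (2 : ℝ)⁻¹ • (u + vs) + (‖u - vs‖ / 2) • σ)
      ((2:ℝ)⁻¹ • ContinuousLinearMap.id ℝ (EuclideanSpace ℝ (Fin 3))
        + ((2:ℝ)⁻¹ • innerSL ℝ k).smulRight σ) v := by
    have h1 : HasFDerivAt (fun u : EuclideanSpace ℝ (Fin 3) => (2:ℝ)⁻¹ • (u + vs))
        ((2:ℝ)⁻¹ • ContinuousLinearMap.id ℝ (EuclideanSpace ℝ (Fin 3))) v :=
      ((hasFDerivAt_id v).add_const vs).const_smul (2:ℝ)⁻¹
    have h2 : HasFDerivAt (fun u : EuclideanSpace ℝ (Fin 3) => ‖u - vs‖) (innerSL ℝ k) v := by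
      have h2' := (hasFDerivAt_norm'' hx).comp v ((hasFDerivAt_id v).sub_const vs)
      rw [ContinuousLinearMap.comp_id] at h2'
      exact h2'
    have h3 : HasFDerivAt (fun u : EuclideanSpace ℝ (Fin 3) => ‖u - vs‖ / 2)
        ((2:ℝ)⁻¹ • innerSL ℝ k) v := by
      simpa [div_eq_inv_mul, smul_smul] using h2.const_mul (2:ℝ)⁻¹
    exact h1.add (h3.smul_const σ)
  rw [hA.fderiv, det_collision_map σ k _ rfl]
  set c : ℝ := ⟪k, σ⟫ with hc
  have hknorm : ‖k‖ = 1 := by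
    rw [hk, norm_smul, norm_inv, norm_norm, inv_mul_cancel₀ (norm_ne_zero_iff.mpr hx)]
  have habs : |c| ≤ 1 := by
    calc |c| ≤ ‖k‖ * ‖σ‖ := abs_real_inner_le_norm k σ
    _ = 1 := by rw [hknorm, hσ]; ring
  have hc1 : -1 ≤ c := neg_le_of_abs_le habs
  have hc2 : c ≤ 1 := le_of_abs_le habs
  have hcos : Real.cos (Real.arccos c / 2) ^ 2 = (1 + c) / 2 := by
    rw [Real.cos_sq, mul_div_cancel₀ _ (two_ne_zero), Real.cos_arccos hc1 hc2]
    ring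
  rw [hcos]
  rw [abs_of_nonneg (by nlinarith)]
  ring
end

section
/- Let l ≥ 2 be a real number. Then there exists C > 0 such that for all v, v₊ ∈ ℝ³, σ ∈ S² with post-collisional velocities v', v'₊ in the σ-representation and deviation angle θ, |W_{l-1}(v) - W_{l-1}(v')| ≤ C (θ W_{l-1}(v') W₁(v'₊) + θ^{l-1} W_{l-1}(v'₊)). -/
/-!
Write `⟨x⟩ = √(1 + ‖x‖²)`, `m = l - 1` and `D = ‖v - v₊‖`. Since `v - v'` is `D/2` times a chord of
the unit sphere subtending the angle `θ`, `‖v - v'‖ ≤ θD/2 =: K`; as `⟨·⟩` is 1-Lipschitz, the mean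
value theorem for `t ↦ tᵐ` bounds the left-hand side by `m (⟨v'⟩ + K)^{m-1} K`. Moreover
`D = ‖v' - v'₊‖ ≤ ⟨v'⟩⟨v'₊⟩`. If `K ≤ ⟨v'⟩` this gives `≲ θ ⟨v'⟩ᵐ ⟨v'₊⟩`. Otherwise
`‖v'‖ ≤ K ≤ πD/4`, so `v'₊` carries a fixed fraction of `D`, `D ≤ 5⟨v'₊⟩`, and we get `≲ (θ⟨v'₊⟩)ᵐ`.
-/

open scoped RealInnerProductSpace
open Real

section JapaneseBracket

variable {E : Type*} [SeminormedAddCommGroup E]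

noncomputable def japaneseBracket (x : E) : ℝ := √(1 + ‖x‖ ^ 2)

lemma japaneseBracket_nonneg (x : E) : 0 ≤ japaneseBracket x := sqrt_nonneg _

lemma norm_le_japaneseBracket (x : E) : ‖x‖ ≤ japaneseBracket x :=
  (le_sqrt (norm_nonneg x) (by positivity)).2 (by linarith)

lemma one_add_norm_sq_rpow_half (x : E) (m : ℝ) :
    (1 + ‖x‖ ^ 2) ^ (m / 2) = japaneseBracket x ^ m := by
  rw [japaneseBracket, sqrt_eq_rpow, ← rpow_mul (by positivity)]
  ring_nf

lemma abs_japaneseBracket_sub_le (x y : E) :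
    |japaneseBracket x - japaneseBracket y| ≤ ‖x - y‖ := by
  let P : ℝ → EuclideanSpace ℝ (Fin 2) := fun t => !₂[1, t]
  have hP (t : ℝ) : ‖P t‖ = √(1 + t ^ 2) := by
    simp [P, EuclideanSpace.norm_eq, Fin.sum_univ_two]
  have hPsub (s t : ℝ) : ‖P s - P t‖ = |s - t| := by
    simp [P, EuclideanSpace.norm_eq, Fin.sum_univ_two, ← WithLp.toLp_sub, sqrt_sq_eq_abs]
  calc |japaneseBracket x - japaneseBracket y| = |‖P ‖x‖‖ - ‖P ‖y‖‖| := by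
        rw [hP, hP, japaneseBracket, japaneseBracket]
    _ ≤ ‖P ‖x‖ - P ‖y‖‖ := abs_norm_sub_norm_le _ _
    _ = |‖x‖ - ‖y‖| := hPsub _ _
    _ ≤ ‖x - y‖ := abs_norm_sub_norm_le x y

lemma norm_add_norm_le_japaneseBracket_mul (x y : E) :
    ‖x‖ + ‖y‖ ≤ japaneseBracket x * japaneseBracket y := by
  rw [japaneseBracket, japaneseBracket, ← sqrt_mul (by positivity),
    le_sqrt (by positivity) (by positivity)]
  nlinarith [sq_nonneg (‖x‖ * ‖y‖ - 1)]

end JapaneseBracket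

section RpowDifference

lemma rpow_sub_one_mul_self {m x : ℝ} (hm : m ≠ 0) (hx : 0 ≤ x) : x ^ (m - 1) * x = x ^ m := by
  conv_rhs => rw [← sub_add_cancel m 1, rpow_add' hx (by simpa using hm), rpow_one]

lemma rpow_sub_rpow_le_mul_rpow_mul_sub {m a b : ℝ} (hm : 1 ≤ m) (hb : 0 ≤ b) (hba : b ≤ a) :
    a ^ m - b ^ m ≤ m * a ^ (m - 1) * (a - b) := by
  obtain rfl | ha := (hb.trans hba).eq_or_lt
  · simp [le_antisymm hba hb]
  have bernoulli := one_add_mul_self_le_rpow_one_add (s := b / a - 1)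
    (by linarith [div_nonneg hb ha.le]) hm
  rw [add_sub_cancel, div_rpow hb ha.le, le_div_iff₀ (by positivity)] at bernoulli
  rw [← rpow_sub_one_mul_self (by linarith) ha.le] at bernoulli ⊢
  field_simp at bernoulli
  linarith

lemma abs_rpow_sub_rpow_le {m a b d : ℝ} (hm : 1 ≤ m) (ha : 0 ≤ a) (hb : 0 ≤ b)
    (hab : |a - b| ≤ d) : |a ^ m - b ^ m| ≤ m * (b + d) ^ (m - 1) * d := by
  obtain ⟨hba, hab⟩ := abs_le.1 hab
  have hcoef : 0 ≤ m * (b + d) ^ (m - 1) := mul_nonneg (by linarith) (rpow_nonneg (by linarith) _)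
  rcases le_total b a with h | h
  · rw [abs_of_nonneg (sub_nonneg.2 (rpow_le_rpow hb h (by linarith)))]
    calc a ^ m - b ^ m ≤ m * a ^ (m - 1) * (a - b) := rpow_sub_rpow_le_mul_rpow_mul_sub hm hb h
      _ ≤ m * (b + d) ^ (m - 1) * d := by gcongr; linarith
  · rw [abs_sub_comm, abs_of_nonneg (sub_nonneg.2 (rpow_le_rpow ha h (by linarith)))]
    calc b ^ m - a ^ m ≤ m * b ^ (m - 1) * (b - a) := rpow_sub_rpow_le_mul_rpow_mul_sub hm ha h
      _ ≤ m * (b + d) ^ (m - 1) * d := by gcongr <;> linarith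

lemma add_rpow_sub_one_mul_le {m b e K θ : ℝ} (hm : 1 ≤ m) (hb : 0 ≤ b) (he : 0 ≤ e)
    (hθ : 0 ≤ θ) (hK : 0 ≤ K) (hKbe : K ≤ θ / 2 * (b * e)) (hKe : b ≤ K → K ≤ 5 / 2 * (θ * e)) :
    (b + K) ^ (m - 1) * K ≤ 5 ^ m * (θ * b ^ m * e + θ ^ m * e ^ m) := by
  have hm₀ : 0 ≤ m - 1 := by linarith
  have h2 : (2 : ℝ) ^ (m - 1) ≤ 2 ^ m :=
    rpow_le_rpow_of_exponent_le one_le_two (sub_le_self m zero_le_one)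
  rcases le_total K b with h | h
  · have h25 : (2 : ℝ) ^ (m - 1) / 2 ≤ 5 ^ m :=
      calc (2 : ℝ) ^ (m - 1) / 2 ≤ 2 ^ m := by linarith [rpow_nonneg zero_le_two (m - 1)]
        _ ≤ 5 ^ m := rpow_le_rpow zero_le_two (by norm_num) (by linarith)
    calc (b + K) ^ (m - 1) * K ≤ (2 * b) ^ (m - 1) * (θ / 2 * (b * e)) := by gcongr; linarith
      _ = 2 ^ (m - 1) / 2 * (θ * (b ^ (m - 1) * b) * e) := by
        rw [mul_rpow zero_le_two hb]; ring
      _ = 2 ^ (m - 1) / 2 * (θ * b ^ m * e) := by rw [rpow_sub_one_mul_self (by linarith) hb]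
      _ ≤ 5 ^ m * (θ * b ^ m * e + θ ^ m * e ^ m) := by
        gcongr; exact le_add_of_nonneg_right (by positivity)
  · have h25 : (2 : ℝ) ^ (m - 1) * (5 / 2) ^ m ≤ 5 ^ m :=
      calc (2 : ℝ) ^ (m - 1) * (5 / 2) ^ m ≤ 2 ^ m * (5 / 2) ^ m :=
          mul_le_mul_of_nonneg_right h2 (by positivity)
        _ = 5 ^ m := by rw [← mul_rpow zero_le_two (by norm_num)]; norm_num
    calc (b + K) ^ (m - 1) * K ≤ (2 * K) ^ (m - 1) * K := by gcongr; linarith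
      _ = 2 ^ (m - 1) * K ^ m := by
        rw [mul_rpow zero_le_two hK, mul_assoc, rpow_sub_one_mul_self (by linarith) hK]
      _ ≤ 2 ^ (m - 1) * (5 / 2 * (θ * e)) ^ m := by gcongr; exact hKe h
      _ = 2 ^ (m - 1) * (5 / 2) ^ m * (θ ^ m * e ^ m) := by
        rw [mul_rpow (by norm_num) (by positivity), mul_rpow hθ he]; ring
      _ ≤ 5 ^ m * (θ * b ^ m * e + θ ^ m * e ^ m) := by
        gcongr; exact le_add_of_nonneg_left (by positivity)

end RpowDifference

section Collision

variable {E : Type*} [NormedAddCommGroup E] [InnerProductSpace ℝ E]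

lemma norm_sub_le_arccos_inner {u σ : E} (hu : ‖u‖ = 1) (hσ : ‖σ‖ = 1) :
    ‖u - σ‖ ≤ arccos ⟪u, σ⟫ := by
  have hinner := abs_le.1 ((abs_real_inner_le_norm u σ).trans_eq (by rw [hu, hσ, one_mul]))
  have hcos : cos (arccos ⟪u, σ⟫) = ⟪u, σ⟫ := cos_arccos hinner.1 hinner.2
  have hsq : ‖u - σ‖ ^ 2 ≤ arccos ⟪u, σ⟫ ^ 2 := by
    rw [norm_sub_sq_real, hu, hσ]
    linarith [one_sub_sq_div_two_le_cos (x := arccos ⟪u, σ⟫)]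
  exact (pow_le_pow_iff_left₀ (norm_nonneg _) (arccos_nonneg _) two_ne_zero).1 hsq

-- `postVel v vs σ`, `postVelStar v vs σ` and `deviationAngle v vs σ` are the paper's
-- `v'`, `v'₊` and `θ`.

noncomputable def postVel (v vs σ : E) : E := (2 : ℝ)⁻¹ • (v + vs) + (‖v - vs‖ / 2) • σ

noncomputable def postVelStar (v vs σ : E) : E := (2 : ℝ)⁻¹ • (v + vs) - (‖v - vs‖ / 2) • σ

noncomputable def deviationAngle (v vs σ : E) : ℝ := arccos ⟪‖v - vs‖⁻¹ • (v - vs), σ⟫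

variable {v vs σ : E}

lemma norm_sub_postVel_le (hσ : ‖σ‖ = 1) (hne : v ≠ vs) :
    ‖v - postVel v vs σ‖ ≤ deviationAngle v vs σ / 2 * ‖v - vs‖ := by
  have hD : ‖v - vs‖ ≠ 0 := norm_ne_zero_iff.2 (sub_ne_zero.2 hne)
  have hu : ‖‖v - vs‖⁻¹ • (v - vs)‖ = 1 := by
    rw [norm_smul, norm_inv, norm_norm, inv_mul_cancel₀ hD]
  have hchord : v - postVel v vs σ = (‖v - vs‖ / 2) • (‖v - vs‖⁻¹ • (v - vs) - σ) := by
    have hhalf : ‖v - vs‖ / 2 * ‖v - vs‖⁻¹ = 2⁻¹ := by field_simp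
    rw [postVel, smul_sub, smul_smul, hhalf]
    module
  calc ‖v - postVel v vs σ‖ = ‖v - vs‖ / 2 * ‖‖v - vs‖⁻¹ • (v - vs) - σ‖ := by
        rw [hchord, norm_smul, Real.norm_of_nonneg (by positivity)]
    _ ≤ ‖v - vs‖ / 2 * deviationAngle v vs σ :=
        mul_le_mul_of_nonneg_left (norm_sub_le_arccos_inner hu hσ) (by positivity)
    _ = deviationAngle v vs σ / 2 * ‖v - vs‖ := by ring

lemma norm_sub_le_norm_postVel_add (hσ : ‖σ‖ = 1) :
    ‖v - vs‖ ≤ ‖postVel v vs σ‖ + ‖postVelStar v vs σ‖ := by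
  have h : postVel v vs σ - postVelStar v vs σ = ‖v - vs‖ • σ := by
    rw [postVel, postVelStar]
    module
  calc ‖v - vs‖ = ‖postVel v vs σ - postVelStar v vs σ‖ := by
        rw [h, norm_smul, hσ, norm_norm, mul_one]
    _ ≤ ‖postVel v vs σ‖ + ‖postVelStar v vs σ‖ := norm_sub_le _ _

lemma norm_sub_le_japaneseBracket_mul (hσ : ‖σ‖ = 1) :
    ‖v - vs‖ ≤ japaneseBracket (postVel v vs σ) * japaneseBracket (postVelStar v vs σ) :=
  (norm_sub_le_norm_postVel_add hσ).trans (norm_add_norm_le_japaneseBracket_mul _ _)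

lemma norm_sub_le_five_mul_japaneseBracket_postVelStar (hσ : ‖σ‖ = 1)
    (hθ : deviationAngle v vs σ ≤ π / 2)
    (hsmall : japaneseBracket (postVel v vs σ) ≤ deviationAngle v vs σ / 2 * ‖v - vs‖) :
    ‖v - vs‖ ≤ 5 * japaneseBracket (postVelStar v vs σ) := by
  have hθD : deviationAngle v vs σ / 2 * ‖v - vs‖ ≤ 3.15 / 4 * ‖v - vs‖ :=
    mul_le_mul_of_nonneg_right (by linarith [pi_lt_d2]) (norm_nonneg _)
  linarith [norm_sub_le_norm_postVel_add (v := v) (vs := vs) hσ,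
    norm_le_japaneseBracket (postVel v vs σ), norm_le_japaneseBracket (postVelStar v vs σ),
    japaneseBracket_nonneg (postVelStar v vs σ)]

theorem abs_japaneseBracket_rpow_sub_le {m : ℝ} (hm : 1 ≤ m) (hσ : ‖σ‖ = 1) (hne : v ≠ vs)
    (hθ : deviationAngle v vs σ ≤ π / 2) :
    |japaneseBracket v ^ m - japaneseBracket (postVel v vs σ) ^ m| ≤
      m * 5 ^ m * (deviationAngle v vs σ * japaneseBracket (postVel v vs σ) ^ m *
          japaneseBracket (postVelStar v vs σ) +
        deviationAngle v vs σ ^ m * japaneseBracket (postVelStar v vs σ) ^ m) := by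
  set θ := deviationAngle v vs σ
  set b := japaneseBracket (postVel v vs σ)
  set e := japaneseBracket (postVelStar v vs σ)
  set K := θ / 2 * ‖v - vs‖
  have hθ0 : 0 ≤ θ := arccos_nonneg _
  have hb : 0 ≤ b := japaneseBracket_nonneg _
  have he : 0 ≤ e := japaneseBracket_nonneg _
  have hKbe : K ≤ θ / 2 * (b * e) :=
    mul_le_mul_of_nonneg_left (norm_sub_le_japaneseBracket_mul hσ) (by positivity)
  have hKe (h : b ≤ K) : K ≤ 5 / 2 * (θ * e) :=
    calc K ≤ θ / 2 * (5 * e) := mul_le_mul_of_nonneg_left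
          (norm_sub_le_five_mul_japaneseBracket_postVelStar hσ hθ h) (by positivity)
      _ = 5 / 2 * (θ * e) := by ring
  have hdiff : |japaneseBracket v - b| ≤ K :=
    (abs_japaneseBracket_sub_le _ _).trans (norm_sub_postVel_le hσ hne)
  calc _ ≤ m * (b + K) ^ (m - 1) * K :=
        abs_rpow_sub_rpow_le hm (japaneseBracket_nonneg v) hb hdiff
    _ = m * ((b + K) ^ (m - 1) * K) := mul_assoc _ _ _
    _ ≤ m * (5 ^ m * (θ * b ^ m * e + θ ^ m * e ^ m)) := mul_le_mul_of_nonneg_left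
        (add_rpow_sub_one_mul_le hm hb he hθ0 (by positivity) hKbe hKe) (by linarith)
    _ = _ := (mul_assoc _ _ _).symm

end Collision

/-- Weight difference estimate (Lemma 2.3 of AMUXY): for real `l ≥ 2` there is `C > 0`
such that for all collision configurations (with `v' , v'₊` the σ-representation
post-collisional velocities and `θ ∈ [0, π/2]` the deviation angle),
`|W_{l-1}(v) - W_{l-1}(v')| ≤ C (θ W_{l-1}(v') W₁(v'₊) + θ^{l-1} W_{l-1}(v'₊))`,
where `W_m(u) = (1+|u|²)^{m/2}`. -/
theorem stmt12 (l : ℝ) (hl : 2 ≤ l) :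
    ∃ C : ℝ, 0 < C ∧
      ∀ v vs σ : EuclideanSpace ℝ (Fin 3), ‖σ‖ = 1 → v ≠ vs →
        Real.arccos ⟪‖v - vs‖⁻¹ • (v - vs), σ⟫ ≤ Real.pi / 2 →
        |(1 + ‖v‖ ^ 2) ^ ((l - 1) / 2) -
            (1 + ‖(2 : ℝ)⁻¹ • (v + vs) + (‖v - vs‖ / 2) • σ‖ ^ 2) ^ ((l - 1) / 2)| ≤
          C * (Real.arccos ⟪‖v - vs‖⁻¹ • (v - vs), σ⟫ *
                (1 + ‖(2 : ℝ)⁻¹ • (v + vs) + (‖v - vs‖ / 2) • σ‖ ^ 2) ^ ((l - 1) / 2) *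
                (1 + ‖(2 : ℝ)⁻¹ • (v + vs) - (‖v - vs‖ / 2) • σ‖ ^ 2) ^ ((1 : ℝ) / 2) +
              Real.arccos ⟪‖v - vs‖⁻¹ • (v - vs), σ⟫ ^ (l - 1) *
                (1 + ‖(2 : ℝ)⁻¹ • (v + vs) - (‖v - vs‖ / 2) • σ‖ ^ 2) ^ ((l - 1) / 2)) := by
  refine ⟨(l - 1) * 5 ^ (l - 1), mul_pos (by linarith) (by positivity),
    fun v vs σ hσ hne hθ => ?_⟩
  simp only [one_add_norm_sq_rpow_half, rpow_one]
  exact abs_japaneseBracket_rpow_sub_le (by linarith) hσ hne hθ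
end

section
/- Let l ≥ 1. There is C > 0 such that for all v, v₊ ∈ ℝ³, σ ∈ S² and the post-collisional velocity v' with deviation angle θ: |W_l(v) - W_l(v')| ≤ C θ |v - v₊| W_{l-1}(v) W_{l-1}(v₊). -/
open scoped RealInnerProductSpace

/-!
Write `W_m(t) = (1 + t²)^(m/2)`. Since `|W_l'(t)| ≤ l W_{l-1}(t)` and `W_{l-1}` is monotone for
`l ≥ 1`, the mean value theorem gives
`|W_l(‖v‖) - W_l(‖v'‖)| ≤ l W_{l-1}(max ‖v‖ ‖v'‖) ‖v - v'‖`. As `‖v'‖ ≤ ‖v‖ + ‖v₊‖`, the weight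
is at most `2^((l-1)/2) W_{l-1}(‖v‖) W_{l-1}(‖v₊‖)`. Finally `v - v' = (‖v - v₊‖/2)(n - σ)` with
`n` the unit vector along `v - v₊`, and the chord `‖n - σ‖` is bounded by the arc `θ`.
-/

namespace InnerProductGeometry

variable {V : Type*} [NormedAddCommGroup V] [InnerProductSpace ℝ V]

theorem arccos_inner_inv_norm_smul_eq_angle {x y : V} (hx : x ≠ 0) (hy : ‖y‖ = 1) :
    Real.arccos ⟪‖x‖⁻¹ • x, y⟫ = angle x y := by
  have hxpos : 0 < ‖x‖ := norm_pos_iff.mpr hx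
  rw [← angle_smul_left_of_pos x y (inv_pos.mpr hxpos), angle, norm_smul, norm_inv, norm_norm,
    inv_mul_cancel₀ hxpos.ne', hy, mul_one, div_one]

theorem norm_sub_le_angle {x y : V} (hx : ‖x‖ = 1) (hy : ‖y‖ = 1) : ‖x - y‖ ≤ angle x y := by
  have hchord : ‖x - y‖ ^ 2 = 2 - 2 * Real.cos (angle x y) := by
    rw [norm_sub_sq_real, cos_angle, hx, hy]; ring
  have hcos : 1 - angle x y ^ 2 / 2 ≤ Real.cos (angle x y) := Real.one_sub_sq_div_two_le_cos
  exact le_of_sq_le_sq (by linarith) (angle_nonneg x y)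

end InnerProductGeometry

open InnerProductGeometry

section PostCollision

variable {V : Type*} [NormedAddCommGroup V]

noncomputable def postCollisionVelocity [NormedSpace ℝ V] (v vs σ : V) : V :=
  (2 : ℝ)⁻¹ • (v + vs) + (‖v - vs‖ / 2) • σ

theorem norm_postCollisionVelocity_le [NormedSpace ℝ V] {σ : V} (hσ : ‖σ‖ ≤ 1) (v vs : V) :
    ‖postCollisionVelocity v vs σ‖ ≤ ‖v‖ + ‖vs‖ :=
  calc ‖postCollisionVelocity v vs σ‖
      ≤ 2⁻¹ * ‖v + vs‖ + ‖v - vs‖ / 2 * ‖σ‖ := by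
        refine (norm_add_le _ _).trans_eq ?_
        rw [norm_smul, norm_smul, Real.norm_of_nonneg (by norm_num),
          Real.norm_of_nonneg (by positivity)]
    _ ≤ 2⁻¹ * (‖v‖ + ‖vs‖) + (‖v‖ + ‖vs‖) / 2 * 1 := by
        gcongr
        exacts [norm_add_le _ _, norm_sub_le _ _]
    _ = ‖v‖ + ‖vs‖ := by ring

theorem sub_postCollisionVelocity [NormedSpace ℝ V] (v vs σ : V) :
    v - postCollisionVelocity v vs σ = (‖v - vs‖ / 2) • (‖v - vs‖⁻¹ • (v - vs) - σ) := by
  rcases eq_or_ne v vs with rfl | hne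
  · simp [postCollisionVelocity, ← two_smul ℝ v, smul_smul]
  have hw : ‖v - vs‖ ≠ 0 := norm_ne_zero_iff.mpr (sub_ne_zero.mpr hne)
  rw [postCollisionVelocity, smul_sub, smul_smul, div_mul_eq_mul_div, mul_inv_cancel₀ hw]
  module

variable [InnerProductSpace ℝ V]

theorem norm_sub_postCollisionVelocity_le {σ : V} (hσ : ‖σ‖ = 1) (v vs : V) :
    ‖v - postCollisionVelocity v vs σ‖ ≤ ‖v - vs‖ / 2 * angle (v - vs) σ := by
  rcases eq_or_ne v vs with rfl | hne
  · simp [postCollisionVelocity, ← two_smul ℝ v, smul_smul]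
  have hw : 0 < ‖v - vs‖ := norm_pos_iff.mpr (sub_ne_zero.mpr hne)
  have hn : ‖‖v - vs‖⁻¹ • (v - vs)‖ = 1 := by
    rw [norm_smul, norm_inv, norm_norm, inv_mul_cancel₀ hw.ne']
  rw [sub_postCollisionVelocity, norm_smul, Real.norm_of_nonneg (by positivity),
    ← angle_smul_left_of_pos (v - vs) σ (inv_pos.mpr hw)]
  gcongr
  exact norm_sub_le_angle hn hσ

end PostCollision

theorem abs_deriv_one_add_sq_rpow_le {l : ℝ} (hl : 0 ≤ l) (t : ℝ) :
    |l * t * (1 + t ^ 2) ^ (l / 2 - 1)| ≤ l * (1 + t ^ 2) ^ ((l - 1) / 2) := by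
  have hpos : 0 < 1 + t ^ 2 := by positivity
  have ht : |t| ≤ (1 + t ^ 2) ^ (1 / 2 : ℝ) := by
    rw [← Real.sqrt_eq_rpow]
    exact Real.abs_le_sqrt (by linarith)
  calc |l * t * (1 + t ^ 2) ^ (l / 2 - 1)|
      = l * |t| * (1 + t ^ 2) ^ (l / 2 - 1) := by
        rw [abs_mul, abs_mul, abs_of_nonneg hl, abs_of_pos (Real.rpow_pos_of_pos hpos _)]
    _ ≤ l * (1 + t ^ 2) ^ (1 / 2 : ℝ) * (1 + t ^ 2) ^ (l / 2 - 1) := by gcongr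
    _ = l * (1 + t ^ 2) ^ ((l - 1) / 2) := by
        rw [mul_assoc, ← Real.rpow_add hpos]; ring_nf

theorem abs_one_add_sq_rpow_sub_le {l : ℝ} (hl : 1 ≤ l) {x y : ℝ} (hx : 0 ≤ x) (hy : 0 ≤ y) :
    |(1 + x ^ 2) ^ (l / 2) - (1 + y ^ 2) ^ (l / 2)| ≤
      l * (1 + max x y ^ 2) ^ ((l - 1) / 2) * |x - y| := by
  have hderiv (t : ℝ) :
      HasDerivAt (fun u : ℝ => (1 + u ^ 2) ^ (l / 2)) (l * t * (1 + t ^ 2) ^ (l / 2 - 1)) t := by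
    convert ((hasDerivAt_pow 2 t).const_add 1).rpow_const (p := l / 2)
      (Or.inl (by positivity)) using 1
    push_cast
    ring
  have hbound : ∀ t ∈ Set.Icc 0 (max x y),
      ‖l * t * (1 + t ^ 2) ^ (l / 2 - 1)‖ ≤ l * (1 + max x y ^ 2) ^ ((l - 1) / 2) := by
    rintro t ⟨ht0, htM⟩
    rw [Real.norm_eq_abs]
    refine (abs_deriv_one_add_sq_rpow_le (by linarith) t).trans ?_
    gcongr
  simpa [Real.norm_eq_abs, abs_sub_comm] using
    (convex_Icc 0 (max x y)).norm_image_sub_le_of_norm_hasDerivWithin_le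
      (fun t _ => (hderiv t).hasDerivWithinAt) hbound
      ⟨hy, le_max_right x y⟩ ⟨hx, le_max_left x y⟩

theorem one_add_sq_le_two_mul_of_le_add {a b c : ℝ} (ha : 0 ≤ a) (hb : 0 ≤ b) (hc : 0 ≤ c)
    (hbac : b ≤ a + c) : 1 + b ^ 2 ≤ 2 * ((1 + a ^ 2) * (1 + c ^ 2)) := by
  nlinarith [sq_nonneg (a - c), mul_nonneg ha hc, mul_le_mul hbac hbac hb (by linarith)]

theorem one_add_sq_rpow_le_of_le_add {a b c p : ℝ} (ha : 0 ≤ a) (hb : 0 ≤ b) (hc : 0 ≤ c)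
    (hbac : b ≤ a + c) (hp : 0 ≤ p) :
    (1 + b ^ 2) ^ p ≤ 2 ^ p * (1 + a ^ 2) ^ p * (1 + c ^ 2) ^ p := by
  rw [mul_assoc, ← Real.mul_rpow (by positivity) (by positivity),
    ← Real.mul_rpow (by positivity) (by positivity)]
  exact Real.rpow_le_rpow (by positivity) (one_add_sq_le_two_mul_of_le_add ha hb hc hbac) hp

theorem abs_one_add_sq_rpow_sub_le_of_le_add {l : ℝ} (hl : 1 ≤ l) {x y c : ℝ} (hx : 0 ≤ x)
    (hy : 0 ≤ y) (hc : 0 ≤ c) (hyxc : y ≤ x + c) :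
    |(1 + x ^ 2) ^ (l / 2) - (1 + y ^ 2) ^ (l / 2)| ≤
      l * 2 ^ ((l - 1) / 2) * |x - y| * (1 + x ^ 2) ^ ((l - 1) / 2) *
        (1 + c ^ 2) ^ ((l - 1) / 2) := by
  have hmax : (1 + max x y ^ 2) ^ ((l - 1) / 2) ≤
      2 ^ ((l - 1) / 2) * (1 + x ^ 2) ^ ((l - 1) / 2) * (1 + c ^ 2) ^ ((l - 1) / 2) :=
    one_add_sq_rpow_le_of_le_add hx (le_max_of_le_left hx)
      hc (max_le (by linarith) hyxc) (by linarith)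
  calc _ ≤ l * (1 + max x y ^ 2) ^ ((l - 1) / 2) * |x - y| := abs_one_add_sq_rpow_sub_le hl hx hy
    _ ≤ l * (2 ^ ((l - 1) / 2) * (1 + x ^ 2) ^ ((l - 1) / 2) * (1 + c ^ 2) ^ ((l - 1) / 2)) *
          |x - y| := by gcongr
    _ = _ := by ring

/-- Commutator weight estimate via the Taylor formula: for `l ≥ 1` there is `C > 0` such
that for every collision configuration with post-collisional velocity
`v' = (v+v₊)/2 + (|v-v₊|/2)σ` and deviation angle `θ ∈ [0, π/2]`,
`|W_l(v) - W_l(v')| ≤ C θ |v - v₊| W_{l-1}(v) W_{l-1}(v₊)`, where `W_m(u) = ⟨u⟩^m`. -/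
theorem stmt13 (l : ℝ) (hl : 1 ≤ l) :
    ∃ C : ℝ, 0 < C ∧
      ∀ v vs σ : EuclideanSpace ℝ (Fin 3), ‖σ‖ = 1 → v ≠ vs →
        Real.arccos ⟪‖v - vs‖⁻¹ • (v - vs), σ⟫ ≤ Real.pi / 2 →
        |(1 + ‖v‖ ^ 2) ^ (l / 2) -
            (1 + ‖(2 : ℝ)⁻¹ • (v + vs) + (‖v - vs‖ / 2) • σ‖ ^ 2) ^ (l / 2)| ≤
          C * Real.arccos ⟪‖v - vs‖⁻¹ • (v - vs), σ⟫ * ‖v - vs‖ *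
            (1 + ‖v‖ ^ 2) ^ ((l - 1) / 2) * (1 + ‖vs‖ ^ 2) ^ ((l - 1) / 2) := by
  refine ⟨l * 2 ^ ((l - 1) / 2), by positivity, fun v vs σ hσ hne _ => ?_⟩
  rw [arccos_inner_inv_norm_smul_eq_angle (sub_ne_zero.mpr hne) hσ]
  set θ := angle (v - vs) σ
  have hdist : |‖v‖ - ‖postCollisionVelocity v vs σ‖| ≤ θ * ‖v - vs‖ :=
    calc _ ≤ ‖v - postCollisionVelocity v vs σ‖ := abs_norm_sub_norm_le _ _
      _ ≤ ‖v - vs‖ / 2 * θ := norm_sub_postCollisionVelocity_le hσ v vs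
      _ ≤ θ * ‖v - vs‖ := by nlinarith [angle_nonneg (v - vs) σ, norm_nonneg (v - vs)]
  calc _ ≤ l * 2 ^ ((l - 1) / 2) * |‖v‖ - ‖postCollisionVelocity v vs σ‖| *
        (1 + ‖v‖ ^ 2) ^ ((l - 1) / 2) * (1 + ‖vs‖ ^ 2) ^ ((l - 1) / 2) :=
      abs_one_add_sq_rpow_sub_le_of_le_add hl (norm_nonneg v) (norm_nonneg _) (norm_nonneg vs)
        (norm_postCollisionVelocity_le hσ.le v vs)
    _ ≤ l * 2 ^ ((l - 1) / 2) * (θ * ‖v - vs‖) *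
        (1 + ‖v‖ ^ 2) ^ ((l - 1) / 2) * (1 + ‖vs‖ ^ 2) ^ ((l - 1) / 2) := by gcongr
    _ = _ := by ring
end
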